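/- The generating function C^B(x,y,z) = Σ_{n≥0} N^B_n(x,y)·z^n of the homogeneous type B Narayana polynomials satisfies C^B(x,y,z)² · (1 - 2(x+y)z + (y-x)²z²) = 1 as formal power series. -/

import Mathlib

/-- The homogeneous Narayana polynomial of type B (`X 0` is `x`, `X 1` is `y`). -/
noncomputable def narayanaB2 (n : ℕ) : MvPolynomial (Fin 2) ℚ :=
  ∑ k ∈ Finset.range (n + 1),
    MvPolynomial.C ((n.choose k : ℚ) ^ 2) * MvPolynomial.X 0 ^ k * MvPolynomial.X 1 ^ (n - k)

/-- The ordinary generating function `C^B(x,y,z) = ∑_{n≥0} N^B_n(x,y) zⁿ`,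
a formal power series in `z` over `ℚ[x,y]`. -/
noncomputable def genB : PowerSeries (MvPolynomial (Fin 2) ℚ) :=
  PowerSeries.mk fun n => narayanaB2 n

section NarayanaRec
open Nat MvPolynomial Finset
noncomputable def Pg (M : ℕ) (g : ℕ → ℚ) (d : ℕ) : MvPolynomial (Fin 2) ℚ :=
  ∑ k ∈ Finset.range M, MvPolynomial.C (g k) * MvPolynomial.X 0 ^ k * MvPolynomial.X 1 ^ (d - k)

def shf (g : ℕ → ℚ) : ℕ → ℚ := fun k => if k = 0 then 0 else g (k-1)

lemma X1_Pg {M d : ℕ} {g : ℕ → ℚ} (hg : ∀ k, d < k → g k = 0) :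
    X 1 * Pg M g d = Pg M g (d+1) := by
  unfold Pg
  rw [Finset.mul_sum]
  refine Finset.sum_congr rfl fun k _ => ?_
  by_cases hkd : k ≤ d
  · rw [show d + 1 - k = (d - k) + 1 by omega]; ring
  · rw [hg k (by omega)]; simp

lemma X0_Pg {M d : ℕ} {g : ℕ → ℚ} (hg : ∀ k, d < k → g k = 0) (hdM : d + 1 < M) :
    X 0 * Pg M g d = Pg M (shf g) (d+1) := by
  obtain ⟨M', rfl⟩ : ∃ M', M = M' + 1 := ⟨M - 1, by omega⟩
  unfold Pg
  rw [Finset.mul_sum, Finset.sum_range_succ, Finset.sum_range_succ']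
  rw [hg M' (by omega)]
  simp only [shf, if_neg (Nat.succ_ne_zero _), Nat.add_sub_cancel, if_pos rfl]
  simp only [if_true, map_zero, zero_mul, mul_zero, add_zero]
  refine Finset.sum_congr rfl fun k hk => ?_
  rw [show d + 1 - (k + 1) = d - k by omega]; ring

lemma C_Pg {M d : ℕ} (q : ℚ) (g : ℕ → ℚ) :
    MvPolynomial.C q * Pg M g d = Pg M (fun k => q * g k) d := by
  unfold Pg
  rw [Finset.mul_sum]
  refine Finset.sum_congr rfl fun k _ => ?_
  rw [map_mul]; ring

lemma Pg_add {M d : ℕ} (g h : ℕ → ℚ) :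
    Pg M g d + Pg M h d = Pg M (fun k => g k + h k) d := by
  unfold Pg
  rw [← Finset.sum_add_distrib]
  refine Finset.sum_congr rfl fun k _ => ?_
  rw [map_add]; ring

lemma Pg_sub {M d : ℕ} (g h : ℕ → ℚ) :
    Pg M g d - Pg M h d = Pg M (fun k => g k - h k) d := by
  unfold Pg
  rw [← Finset.sum_sub_distrib]
  refine Finset.sum_congr rfl fun k _ => ?_
  rw [map_sub]; ring

lemma narayanaB2_eq_Pg (n M : ℕ) (h : n + 1 ≤ M) :
    narayanaB2 n = Pg M (fun k => (n.choose k : ℚ)^2) n := by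
  unfold narayanaB2 Pg
  refine Finset.sum_subset (Finset.range_subset_range.2 h) fun k _ hk => ?_
  rw [Nat.choose_eq_zero_of_lt (by simpa using hk)]
  simp

set_option maxHeartbeats 4000000 in
lemma keyId (m j : ℕ) :
    ((m:ℚ)+2) * ((m+2).choose (j+2) : ℚ)^2
      + ((m:ℚ)+1) * (((m.choose j : ℚ))^2 - 2*((m.choose (j+1) : ℚ))^2 + ((m.choose (j+2) : ℚ))^2)
    = (2*(m:ℚ)+3) * (((m+1).choose (j+1) : ℚ)^2 + ((m+1).choose (j+2) : ℚ)^2) := by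
  rcases lt_or_ge m j with h | h
  · rw [Nat.choose_eq_zero_of_lt (by omega), Nat.choose_eq_zero_of_lt (by omega),
        Nat.choose_eq_zero_of_lt (by omega), Nat.choose_eq_zero_of_lt (by omega),
        Nat.choose_eq_zero_of_lt (by omega), Nat.choose_eq_zero_of_lt (by omega)]
    push_cast; ring
  · obtain ⟨t, rfl⟩ : ∃ t, m = j + t := ⟨m - j, by omega⟩
    match t with
    | 0 =>
      simp only [Nat.add_zero]
      rw [show j + 2 = (j+2) from rfl, Nat.choose_self,
          Nat.choose_self j,
          Nat.choose_eq_zero_of_lt (show j < j+1 by omega),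
          Nat.choose_eq_zero_of_lt (show j < j+2 by omega),
          show (j+1).choose (j+1) = 1 from Nat.choose_self _,
          Nat.choose_eq_zero_of_lt (show j+1 < j+2 by omega)]
      push_cast; ring
    | 1 =>
      rw [show j + 1 + 2 = (j+2)+1 from rfl, Nat.choose_succ_self_right,
          show (j+1).choose j = j+1 from Nat.choose_succ_self_right j,
          show (j+1).choose (j+1) = 1 from Nat.choose_self _,
          Nat.choose_eq_zero_of_lt (show j+1 < j+2 by omega),
          show (j+1+1).choose (j+1) = j+2 from Nat.choose_succ_self_right (j+1),
          show (j+1+1).choose (j+2) = 1 from Nat.choose_self _]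
      push_cast; ring
    | (t+2) =>
      have e1 : j + (t + 2) + 2 = (j+2) + (t+2) := by ring
      rw [e1, Nat.cast_add_choose,
          Nat.cast_add_choose,
          show (j+(t+2)).choose (j+1) = ((j+1) + (t+1)).choose (j+1) by congr 1; ring,
          Nat.cast_add_choose,
          show (j+(t+2)).choose (j+2) = ((j+2) + t).choose (j+2) by congr 1; ring,
          Nat.cast_add_choose,
          show (j+(t+2)+1).choose (j+1) = ((j+1) + (t+2)).choose (j+1) by congr 1; ring,
          Nat.cast_add_choose,
          show (j+(t+2)+1).choose (j+2) = ((j+2) + (t+1)).choose (j+2) by congr 1; ring,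
          Nat.cast_add_choose]
      have g1 : ((j+2)+(t+2)) = ((j+t+2)+1)+1 := by ring
      have g2 : ((j+1)+(t+2)) = (j+t+2)+1 := by ring
      have g3 : ((j+2)+(t+1)) = (j+t+2)+1 := by ring
      have g4 : (j+(t+2)) = (j+t+2) := by ring
      have g5 : ((j+1)+(t+1)) = (j+t+2) := by ring
      have g6 : ((j+2)+t) = (j+t+2) := by ring
      rw [g1, g2, g3, g4, g5, g6, Nat.factorial_succ ((j+t+2)+1), Nat.factorial_succ (j+t+2),
          Nat.factorial_succ (j+1), Nat.factorial_succ j,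
          Nat.factorial_succ (t+1), Nat.factorial_succ t]
      have hjq : ((j ! : ℕ) : ℚ) ≠ 0 := Nat.cast_ne_zero.2 (Nat.factorial_ne_zero _)
      have htq : ((t ! : ℕ) : ℚ) ≠ 0 := Nat.cast_ne_zero.2 (Nat.factorial_ne_zero _)
      have hA : (((j+t+2)! : ℕ) : ℚ) ≠ 0 := Nat.cast_ne_zero.2 (Nat.factorial_ne_zero _)
      push_cast
      have h1 : (j:ℚ)+1 ≠ 0 := by positivity
      have h2 : (j:ℚ)+2 ≠ 0 := by positivity
      have h3 : (t:ℚ)+1 ≠ 0 := by positivity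
      have h4 : (t:ℚ)+2 ≠ 0 := by positivity
      field_simp
      ring

lemma narayana_rec (m : ℕ) :
    MvPolynomial.C ((m:ℚ)+2) * narayanaB2 (m+2)
      + MvPolynomial.C ((m:ℚ)+1) * ((X 1 - X 0)^2 * narayanaB2 m)
    = MvPolynomial.C (2*(m:ℚ)+3) * ((X 0 + X 1) * narayanaB2 (m+1)) := by
  set c0 : ℕ → ℚ := fun k => (m.choose k : ℚ)^2 with hc0
  set c1 : ℕ → ℚ := fun k => ((m+1).choose k : ℚ)^2 with hc1
  set c2 : ℕ → ℚ := fun k => ((m+2).choose k : ℚ)^2 with hc2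
  have good0 : ∀ k, m < k → c0 k = 0 := fun k hk => by
    simp [hc0, Nat.choose_eq_zero_of_lt hk]
  have good0' : ∀ k, m + 1 < k → c0 k = 0 := fun k hk => good0 k (by omega)
  have good1 : ∀ k, m + 1 < k → c1 k = 0 := fun k hk => by
    simp [hc1, Nat.choose_eq_zero_of_lt hk]
  have goodS : ∀ k, m + 1 < k → shf c0 k = 0 := by
    intro k hk
    simp only [shf, if_neg (show k ≠ 0 by omega)]
    exact good0 _ (by omega)
  rw [narayanaB2_eq_Pg (m+2) (m+3) (by omega), narayanaB2_eq_Pg (m+1) (m+3) (by omega),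
      narayanaB2_eq_Pg m (m+3) (by omega)]
  have expand : ∀ P : MvPolynomial (Fin 2) ℚ,
      (X 1 - X 0)^2 * P
        = X 1 * (X 1 * P) - MvPolynomial.C 2 * (X 0 * (X 1 * P)) + X 0 * (X 0 * P) := by
    intro P
    rw [show (MvPolynomial.C (2:ℚ) : MvPolynomial (Fin 2) ℚ) = 2 from map_ofNat _ 2]
    ring
  rw [expand, add_mul, X1_Pg good0, X1_Pg good0', X0_Pg good0' (by omega),
      X0_Pg good0 (by omega), X0_Pg goodS (by omega), X0_Pg good1 (by omega),
      X1_Pg good1, C_Pg 2 (shf c0), Pg_sub, Pg_add, Pg_add, C_Pg, C_Pg, C_Pg]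
  simp only [show m+1+1 = m+2 from rfl]
  rw [Pg_add]
  unfold Pg
  apply Finset.sum_congr rfl
  intro k _
  congr 2
  congr 1
  match k with
  | 0 =>
    norm_num [shf, hc0, hc1, hc2]
    ring
  | 1 =>
    norm_num [shf, hc0, hc1, hc2, Nat.choose_one_right]
    ring
  | (j+2) =>
    simp only [shf, if_neg (Nat.succ_ne_zero _), Nat.add_sub_cancel,
      show j + 2 - 1 = j + 1 from rfl, show j + 1 - 1 = j from rfl, hc0, hc1, hc2]
    linarith [keyId m j]

end NarayanaRec

namespace PSproof

abbrev R := MvPolynomial (Fin 2) ℚ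

noncomputable def qq : PowerSeries R :=
  1 - PowerSeries.C (R := R) (2 * (MvPolynomial.X 0 + MvPolynomial.X 1)) * PowerSeries.X
    + PowerSeries.C (R := R) ((MvPolynomial.X 1 - MvPolynomial.X 0)^2) * PowerSeries.X ^ 2

noncomputable def cc : PowerSeries R :=
  PowerSeries.C (R := R) (MvPolynomial.X 0 + MvPolynomial.X 1)
    - PowerSeries.C (R := R) ((MvPolynomial.X 1 - MvPolynomial.X 0)^2) * PowerSeries.X

open PowerSeries

lemma cast_nat_C (n : ℕ) : ((n : R)) = MvPolynomial.C ((n : ℚ)) := by simp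

lemma rec' (m : ℕ) :
    ((m:R)+2) * narayanaB2 (m+2)
      + ((m:R)+1) * ((MvPolynomial.X 1 - MvPolynomial.X 0)^2 * narayanaB2 m)
    = (2*(m:R)+3) * ((MvPolynomial.X 0 + MvPolynomial.X 1) * narayanaB2 (m+1)) := by
  have h := narayana_rec m
  have e1 : ((m:R)+2) = MvPolynomial.C ((m:ℚ)+2) := by
    rw [map_add, map_ofNat, cast_nat_C]
  have e2 : ((m:R)+1) = MvPolynomial.C ((m:ℚ)+1) := by
    rw [map_add, map_one, cast_nat_C]
  have e3 : (2*(m:R)+3) = MvPolynomial.C (2*(m:ℚ)+3) := by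
    rw [map_add, map_mul, map_ofNat, map_ofNat, cast_nat_C]
  rw [e1, e2, e3]; exact h

lemma nar_zero : narayanaB2 0 = 1 := by simp [narayanaB2]

lemma nar_one : narayanaB2 1 = MvPolynomial.X 0 + MvPolynomial.X 1 := by
  simp [narayanaB2, Finset.sum_range_succ]
  ring

lemma main1 : qq * (d⁄dX R genB) = cc * genB := by
  refine PowerSeries.ext fun n => ?_
  have hD : ∀ k, (coeff k) (d⁄dX R genB) = narayanaB2 (k+1) * ((k : R)+1) := by
    intro k; rw [coeff_derivative]; simp [genB]
  rw [qq, cc]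
  simp only [sub_mul, add_mul, one_mul, mul_assoc, map_sub, map_add, coeff_C_mul]
  match n with
  | 0 =>
    rw [coeff_zero_X_mul, coeff_zero_X_mul, coeff_X_pow_mul' (d⁄dX R genB) 2 0,
      hD 0]
    norm_num [genB, nar_zero, nar_one]
  | 1 =>
    rw [coeff_succ_X_mul, coeff_succ_X_mul, coeff_X_pow_mul' (d⁄dX R genB) 2 1]
    rw [hD 1, hD 0]
    simp only [genB, coeff_mk]
    have h := rec' 0
    push_cast at h ⊢
    rw [nar_zero, nar_one] at *
    norm_num
    linear_combination h
  | (m+2) =>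
    rw [coeff_succ_X_mul, coeff_succ_X_mul,
      coeff_X_pow_mul (d⁄dX R genB) 2 m]
    rw [hD (m+2), hD (m+1), hD m]
    rw [show (m+1)+1 = m+2 from rfl, show (m+2)+1 = m+3 from rfl]
    simp only [genB, coeff_mk]
    have h := rec' (m+1)
    push_cast at h ⊢
    rw [show (m+1)+2 = m+3 from rfl, show (m+1)+1 = m+2 from rfl] at h
    linear_combination h

lemma hDq : d⁄dX R qq = - 2 * cc := by
  have h2 : (d⁄dX R) 2 = 0 := by
    rw [show (2 : PowerSeries R) = PowerSeries.C (R := R) 2 from (map_ofNat (PowerSeries.C (R := R)) 2).symm,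
      derivative_C]
  rw [qq, cc]
  simp only [h2, mul_zero, zero_mul, add_zero, sub_zero, map_sub, map_add, Derivation.leibniz, Derivation.leibniz_pow,
    derivative_C, derivative_X, Derivation.map_one_eq_zero, map_mul, map_ofNat]
  simp only [smul_eq_mul]
  ring

theorem genB_sq_eq' : genB ^ 2 * qq = 1 := by
  apply PowerSeries.derivative.ext
  · rw [Derivation.leibniz, Derivation.leibniz_pow, hDq,
      Derivation.map_one_eq_zero]
    rw [show (2:ℕ) - 1 = 1 from rfl, pow_one, nsmul_eq_mul]
    simp only [smul_eq_mul]
    push_cast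
    linear_combination 2 * genB * main1
  · simp [qq, genB, nar_zero, map_mul, map_pow]

end PSproof

theorem genB_sq_eq :
    genB ^ 2 *
        (1 - PowerSeries.C (R := MvPolynomial (Fin 2) ℚ)
              (2 * (MvPolynomial.X 0 + MvPolynomial.X 1)) * PowerSeries.X +
          PowerSeries.C (R := MvPolynomial (Fin 2) ℚ)
              ((MvPolynomial.X 1 - MvPolynomial.X 0) ^ 2) * PowerSeries.X ^ 2) = 1 := by
  have h := PSproof.genB_sq_eq'
  rwa [PSproof.qq] at h
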